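/- arXiv:2301.08543 — 2 statements merged into one kernel-verified Lean document; each statement's English description precedes it below -/
import Mathlib

section
/- Let g : ℝ² → ℝ² be a C¹ map with g(0) = 0 whose Jacobian A at 0 has eigenvalues 0 and λ with |λ| ≥ 1. Let B = {e₀, e_λ} be a basis of eigenvectors, ‖·‖ the ℓ¹-norm in these coordinates, and for α > 0 let C(α) = {u = (u₀, u_λ)_B ≠ 0 : |u₀| < α|u_λ|}. Then for every ε ∈ (0, 1/2) there exists δ > 0 such that for all u with 0 < ‖u‖ < δ: (i) if u ∉ C((|λ|+2ε−1)/(1−2ε)) then ‖g(u)‖ < (1−ε)‖u‖; and (ii) if u ∈ C((|λ|−3ε)/(3ε)) then |(g(u))_λ| > ε‖u‖, so in particular g(u) does not lie in the span of e₀. -/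
/-!
Write `g u = A u + r u` with `A = Dg(0)` and `r u = o(u)`. In eigencoordinates `A u = (0, λ u_λ)`,
so `g u = (r₀, λ u_λ + r_λ)`, and since the coordinate `ℓ¹`-norm is equivalent to the norm of the
space, `‖r u‖ ≤ (ε/2) ‖u‖` once `u` is small. Outside the first cone `|λ| |u_λ| ≤ (1 - 2ε) ‖u‖`,
which gives `‖g u‖ ≤ (1 - 3ε/2) ‖u‖`; inside the second one `|λ| |u_λ| > 3ε ‖u‖`, which gives
`|(g u)_λ| > (5ε/2) ‖u‖`.
-/

open Topology Asymptotics

section Coordinates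

variable {E : Type*} [AddCommGroup E] [Module ℝ E] {e0 el : E} {c0 c1 : E → ℝ}

theorem coords_smul_add_smul (hli : LinearIndependent ℝ ![e0, el])
    (hcoord : ∀ u, u = c0 u • e0 + c1 u • el) (a b : ℝ) :
    c0 (a • e0 + b • el) = a ∧ c1 (a • e0 + b • el) = b :=
  hli.eq_of_pair (hcoord _).symm

theorem isLinearMap_coords (hli : LinearIndependent ℝ ![e0, el])
    (hcoord : ∀ u, u = c0 u • e0 + c1 u • el) :
    IsLinearMap ℝ c0 ∧ IsLinearMap ℝ c1 := by
  have hadd (u v : E) : c0 (u + v) = c0 u + c0 v ∧ c1 (u + v) = c1 u + c1 v := by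
    rw [show u + v = (c0 u + c0 v) • e0 + (c1 u + c1 v) • el by
      nth_rw 1 [hcoord u, hcoord v]; module]
    exact coords_smul_add_smul hli hcoord _ _
  have hsmul (t : ℝ) (u : E) : c0 (t • u) = t * c0 u ∧ c1 (t • u) = t * c1 u := by
    rw [show t • u = (t * c0 u) • e0 + (t * c1 u) • el by nth_rw 1 [hcoord u]; module]
    exact coords_smul_add_smul hli hcoord _ _
  exact ⟨⟨fun u v => (hadd u v).1, fun t u => (hsmul t u).1⟩,
    ⟨fun u v => (hadd u v).2, fun t u => (hsmul t u).2⟩⟩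

theorem coords_apply_of_eigenvectors (hli : LinearIndependent ℝ ![e0, el])
    (hcoord : ∀ u, u = c0 u • e0 + c1 u • el) {F : Type*} [FunLike F E E]
    [LinearMapClass F ℝ E E] {A : F} {lam : ℝ}
    (he0 : A e0 = 0) (hel : A el = lam • el) (u : E) :
    c0 (A u) = 0 ∧ c1 (A u) = lam * c1 u := by
  rw [show A u = (0 : ℝ) • e0 + (lam * c1 u) • el by
    nth_rw 1 [hcoord u]; rw [map_add, map_smul, map_smul, he0, hel]; module]
  exact coords_smul_add_smul hli hcoord _ _

theorem coord1_eq_zero_of_mem_span (hli : LinearIndependent ℝ ![e0, el])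
    (hcoord : ∀ u, u = c0 u • e0 + c1 u • el) {v : E} (hv : v ∈ Submodule.span ℝ {e0}) :
    c1 v = 0 := by
  obtain ⟨t, rfl⟩ := Submodule.mem_span_singleton.mp hv
  simpa using (coords_smul_add_smul hli hcoord t 0).2

end Coordinates

section CoordinateNorm

variable {E : Type*} [NormedAddCommGroup E] [NormedSpace ℝ E] {e0 el : E} {c0 c1 : E → ℝ}

theorem norm_le_mul_coords (hcoord : ∀ u, u = c0 u • e0 + c1 u • el) (x : E) :
    ‖x‖ ≤ (‖e0‖ + ‖el‖) * (|c0 x| + |c1 x|) :=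
  calc ‖x‖ = ‖c0 x • e0 + c1 x • el‖ := by rw [← hcoord x]
    _ ≤ |c0 x| * ‖e0‖ + |c1 x| * ‖el‖ := by
      simpa only [norm_smul, Real.norm_eq_abs] using norm_add_le (c0 x • e0) (c1 x • el)
    _ ≤ (‖e0‖ + ‖el‖) * (|c0 x| + |c1 x|) := by
      nlinarith [abs_nonneg (c0 x), abs_nonneg (c1 x), norm_nonneg e0, norm_nonneg el]

theorem exists_coords_le_mul_norm [FiniteDimensional ℝ E] (hli : LinearIndependent ℝ ![e0, el])
    (hcoord : ∀ u, u = c0 u • e0 + c1 u • el) :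
    ∃ K, 0 < K ∧ ∀ x, |c0 x| + |c1 x| ≤ K * ‖x‖ := by
  obtain ⟨hc0, hc1⟩ := isLinearMap_coords hli hcoord
  let C0 := LinearMap.toContinuousLinearMap (hc0.mk' c0)
  let C1 := LinearMap.toContinuousLinearMap (hc1.mk' c1)
  refine ⟨‖C0‖ + ‖C1‖ + 1, by positivity, fun x => ?_⟩
  calc |c0 x| + |c1 x| ≤ ‖C0‖ * ‖x‖ + ‖C1‖ * ‖x‖ := add_le_add (C0.le_opNorm x) (C1.le_opNorm x)
    _ ≤ (‖C0‖ + ‖C1‖ + 1) * ‖x‖ := by nlinarith [norm_nonneg x]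

theorem exists_forall_coords_le_of_isLittleO [FiniteDimensional ℝ E]
    (hli : LinearIndependent ℝ ![e0, el]) (hcoord : ∀ u, u = c0 u • e0 + c1 u • el)
    {f : E → E} (hf : f =o[𝓝 0] fun u => u) {η : ℝ} (hη : 0 < η) :
    ∃ δ > 0, ∀ u, |c0 u| + |c1 u| < δ → |c0 (f u)| + |c1 (f u)| ≤ η * (|c0 u| + |c1 u|) := by
  obtain ⟨K, hK, hcoordK⟩ := exists_coords_le_mul_norm hli hcoord
  set M := ‖e0‖ + ‖el‖
  have hM : 0 < M := add_pos_of_pos_of_nonneg (norm_pos_iff.2 (by simpa using hli.ne_zero 0))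
    (norm_nonneg el)
  obtain ⟨δ, hδ, hfδ⟩ := Metric.eventually_nhds_iff.1 (hf.def (by positivity : 0 < η / (K * M)))
  refine ⟨δ / M, by positivity, fun u hu => ?_⟩
  have hunorm : ‖u‖ < δ := (norm_le_mul_coords hcoord u).trans_lt (by rwa [lt_div_iff₀' hM] at hu)
  calc |c0 (f u)| + |c1 (f u)| ≤ K * ‖f u‖ := hcoordK _
    _ ≤ K * (η / (K * M) * ‖u‖) := by gcongr; exact hfδ (by simpa using hunorm)
    _ ≤ K * (η / (K * M) * (M * (|c0 u| + |c1 u|))) := by gcongr; exact norm_le_mul_coords hcoord u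
    _ = η * (|c0 u| + |c1 u|) := by field_simp

end CoordinateNorm

section ConeEstimates

variable {lam ε a0 a1 r0 r1 : ℝ}

theorem l1_lt_of_notMem_cone (hε : 0 < ε) (hε2 : ε < 1 / 2) (hN : 0 < |a0| + |a1|)
    (hr : |r0| + |r1| ≤ ε / 2 * (|a0| + |a1|))
    (hcone : ¬ |a0| < (|lam| + 2 * ε - 1) / (1 - 2 * ε) * |a1|) :
    |r0| + |lam * a1 + r1| < (1 - ε) * (|a0| + |a1|) := by
  have hlam : |lam| * |a1| ≤ (1 - 2 * ε) * (|a0| + |a1|) := by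
    rw [not_lt, div_mul_eq_mul_div, div_le_iff₀ (by linarith)] at hcone
    linarith
  calc |r0| + |lam * a1 + r1| ≤ |r0| + (|lam| * |a1| + |r1|) := by
        grw [abs_add_le, abs_mul]
    _ ≤ (1 - 3 * ε / 2) * (|a0| + |a1|) := by linarith
    _ < (1 - ε) * (|a0| + |a1|) := by nlinarith

theorem mul_l1_lt_of_mem_cone (hε : 0 < ε) (hr : |r1| ≤ ε / 2 * (|a0| + |a1|))
    (hcone : |a0| < (|lam| - 3 * ε) / (3 * ε) * |a1|) :
    ε * (|a0| + |a1|) < |lam * a1 + r1| := by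
  have hlam : 3 * ε * (|a0| + |a1|) < |lam| * |a1| := by
    rw [div_mul_eq_mul_div, lt_div_iff₀ (by positivity)] at hcone
    linarith
  calc ε * (|a0| + |a1|) ≤ 3 * ε * (|a0| + |a1|) - |r1| := by
        nlinarith [abs_nonneg a0, abs_nonneg a1]
    _ < |lam| * |a1| - |r1| := by linarith
    _ ≤ |lam * a1 + r1| := by
        rw [← abs_mul]; simpa using abs_sub_abs_le_abs_sub (lam * a1) (-r1)

end ConeEstimates

theorem stmt2_general (g : (Fin 2 → ℝ) → (Fin 2 → ℝ)) (hg : ContDiff ℝ 1 g) (h0 : g 0 = 0)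
    (lam : ℝ) (e0 el : Fin 2 → ℝ)
    (hli : LinearIndependent ℝ ![e0, el])
    (he0 : fderiv ℝ g 0 e0 = 0) (hel : fderiv ℝ g 0 el = lam • el)
    (c0 c1 : (Fin 2 → ℝ) → ℝ) (hcoord : ∀ u, u = c0 u • e0 + c1 u • el) :
    ∀ ε : ℝ, 0 < ε → ε < 1 / 2 → ∃ δ > 0, ∀ u : Fin 2 → ℝ,
      0 < |c0 u| + |c1 u| → |c0 u| + |c1 u| < δ →
      (¬ (|c0 u| < (|lam| + 2 * ε - 1) / (1 - 2 * ε) * |c1 u|) →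
          |c0 (g u)| + |c1 (g u)| < (1 - ε) * (|c0 u| + |c1 u|)) ∧
      (|c0 u| < (|lam| - 3 * ε) / (3 * ε) * |c1 u| →
          ε * (|c0 u| + |c1 u|) < |c1 (g u)| ∧ g u ∉ Submodule.span ℝ {e0}) := by
  intro ε hε hε2
  set A := fderiv ℝ g 0
  have hrem : (fun u => g u - A u) =o[𝓝 0] fun u => u := by
    simpa [h0] using ((hg.differentiable one_ne_zero) 0).hasFDerivAt.isLittleO
  obtain ⟨δ, hδ, hremδ⟩ := exists_forall_coords_le_of_isLittleO hli hcoord hrem (half_pos hε)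
  refine ⟨δ, hδ, fun u hN hu => ?_⟩
  have hr := hremδ u hu
  obtain ⟨hc0, hc1⟩ := isLinearMap_coords hli hcoord
  obtain ⟨hA0, hA1⟩ := coords_apply_of_eigenvectors hli hcoord (A := A) he0 hel u
  have hg0 : c0 (g u) = c0 (g u - A u) := by
    simpa only [add_sub_cancel, hA0, zero_add] using hc0.map_add (A u) (g u - A u)
  have hg1 : c1 (g u) = lam * c1 u + c1 (g u - A u) := by
    simpa only [add_sub_cancel, hA1] using hc1.map_add (A u) (g u - A u)
  refine ⟨fun hcone => ?_, fun hcone => ?_⟩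
  · rw [hg0, hg1]
    exact l1_lt_of_notMem_cone hε hε2 hN hr hcone
  · have hlt : ε * (|c0 u| + |c1 u|) < |c1 (g u)| :=
      hg1 ▸ mul_l1_lt_of_mem_cone hε ((le_add_of_nonneg_left (abs_nonneg _)).trans hr) hcone
    refine ⟨hlt, fun hmem => ?_⟩
    rw [coord1_eq_zero_of_mem_span hli hcoord hmem, abs_zero] at hlt
    exact hlt.not_ge (by positivity)

/-- Lemma 4.3 of the paper: local analysis of a planar `C¹` map whose Jacobian at the
fixed point `0` has eigenvalues `0` and `λ` with `|λ| ≥ 1`.  Coordinates `(c₀ u, c₁ u)`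
are taken with respect to the eigenbasis `{e₀, e_λ}`, and the `ℓ¹`-norm of `u` is
`|c₀ u| + |c₁ u|`.  The cone `C(α)` is `{u ≠ 0 : |c₀ u| < α |c₁ u|}`. -/
theorem stmt2 (g : (Fin 2 → ℝ) → (Fin 2 → ℝ)) (hg : ContDiff ℝ 1 g) (h0 : g 0 = 0)
    (lam : ℝ) (hlam : 1 ≤ |lam|) (e0 el : Fin 2 → ℝ)
    (hli : LinearIndependent ℝ ![e0, el])
    (he0 : fderiv ℝ g 0 e0 = 0) (hel : fderiv ℝ g 0 el = lam • el)
    (c0 c1 : (Fin 2 → ℝ) → ℝ) (hcoord : ∀ u, u = c0 u • e0 + c1 u • el) :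
    ∀ ε : ℝ, 0 < ε → ε < 1 / 2 → ∃ δ > 0, ∀ u : Fin 2 → ℝ,
      0 < |c0 u| + |c1 u| → |c0 u| + |c1 u| < δ →
      (¬ (|c0 u| < (|lam| + 2 * ε - 1) / (1 - 2 * ε) * |c1 u|) →
          |c0 (g u)| + |c1 (g u)| < (1 - ε) * (|c0 u| + |c1 u|)) ∧
      (|c0 u| < (|lam| - 3 * ε) / (3 * ε) * |c1 u| →
          ε * (|c0 u| + |c1 u|) < |c1 (g u)| ∧ g u ∉ Submodule.span ℝ {e0}) :=
  stmt2_general g hg h0 lam e0 el hli he0 hel c0 c1 hcoord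
end

section
/- Let F, G : ℝ × D → ℝ × D be continuous maps (D a topological space) that are lifts of the same map of S¹ × D of degree d in the ℝ-factor, i.e. F(x+1, y) = τ^d F(x, y) and G = τᵐ ∘ F where τ(x,y) = (x+1, y) and m ∈ ℤ. If there exist fixed points (x, y) of F and (x′, y′) of G with x − x′ ∈ ℤ and y = y′, then d ≠ 1 implies (d − 1) divides m. -/
/-! Iterating `F ∘ τ = τ^d ∘ F` gives `F ∘ τ^k = τ^(k d) ∘ F` for every `k : ℤ`. If the fixed point
of `G = τ^m ∘ F` is `τ^(-k)` of the fixed point `(x, y)` of `F`, its fixed-point equation reads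
`x - k = x - k d + m`, that is `m = k (d - 1)`. -/

theorem map_add_zsmul_of_map_add {α β D E : Type*} [AddGroup α] [AddGroup β]
    {F : α × D → β × E} {a : α} {b : β}
    (hF : ∀ p : α × D, F (p.1 + a, p.2) = ((F p).1 + b, (F p).2)) (p : α × D) (n : ℤ) :
    F (p.1 + n • a, p.2) = ((F p).1 + n • b, (F p).2) := by
  induction n using Int.induction_on with
  | zero => simp
  | succ i ih =>
    have h := hF (p.1 + (i : ℤ) • a, p.2)
    rw [ih] at h
    simpa only [add_zsmul, one_zsmul, ← add_assoc] using h
  | pred i ih =>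
    have h := hF (p.1 + (-(i : ℤ) - 1) • a, p.2)
    simp only [sub_zsmul, one_zsmul, ← add_assoc, neg_add_cancel_right, ih, Prod.ext_iff] at h
    simp only [sub_zsmul, one_zsmul, ← add_assoc]
    exact Prod.ext (eq_add_neg_of_add_eq h.1.symm) h.2.symm

theorem stmt17_general (D : Type*)
    (F G : ℝ × D → ℝ × D)
    (d m : ℤ)
    (hFd : ∀ p : ℝ × D, F (p.1 + 1, p.2) = ((F p).1 + d, (F p).2))
    (hGF : ∀ p : ℝ × D, G p = ((F p).1 + m, (F p).2))
    (x x' : ℝ) (y y' : D)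
    (hx : F (x, y) = (x, y)) (hx' : G (x', y') = (x', y'))
    (hproj : (∃ k : ℤ, x - x' = (k : ℝ)) ∧ y = y') :
    (d - 1) ∣ m := by
  obtain ⟨⟨k, hk⟩, rfl⟩ := hproj
  have hx'_eq : x' = x + (-k) • (1 : ℝ) := by
    simp only [neg_smul, zsmul_eq_mul, mul_one]
    linarith
  have hFx' : F (x', y) = (x - k * d, y) := by
    simpa [hx, hx'_eq, sub_eq_add_neg] using map_add_zsmul_of_map_add hFd (x, y) (-k)
  have hfix : x - k * d + m = x' := by
    simpa [hFx'] using (congrArg Prod.fst (hGF (x', y))).symm.trans (congrArg Prod.fst hx')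
  have hm : (m : ℝ) = k * (d - 1) := by linarith
  exact ⟨k, by rw [mul_comm]; exact_mod_cast hm⟩

/-- Nielsen lemma in the product model `ℝ × D` covering `S¹ × D` (Lemma 2.1 of the
paper).  `F` is a lift of transversal degree `d` (`F ∘ τ = τ^d ∘ F` with `τ` the unit
translation in the `ℝ`-factor) and `G = τᵐ ∘ F`.  If `F` and `G` have fixed points
projecting to the same point of `S¹ × D`, then `d ≠ 1` implies `(d − 1) ∣ m`. -/
theorem stmt17 (D : Type*) [TopologicalSpace D]
    (F G : ℝ × D → ℝ × D) (hF : Continuous F) (hG : Continuous G)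
    (d m : ℤ)
    (hFd : ∀ p : ℝ × D, F (p.1 + 1, p.2) = ((F p).1 + d, (F p).2))
    (hGF : ∀ p : ℝ × D, G p = ((F p).1 + m, (F p).2))
    (x x' : ℝ) (y y' : D)
    (hx : F (x, y) = (x, y)) (hx' : G (x', y') = (x', y'))
    (hproj : (∃ k : ℤ, x - x' = (k : ℝ)) ∧ y = y')
    (hd : d ≠ 1) :
    (d - 1) ∣ m :=
  stmt17_general D F G d m hFd hGF x x' y y' hx hx' hproj
end
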